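/- arXiv:2008.11008 — 11 statements merged into one kernel-verified Lean document; each statement's English description precedes it below -/
import Mathlib

section
/- Let S be a set with an apartness relation # and let τ be a co-quasiorder on S (strongly irreflexive and cotransitive). Then τ, viewed as a subset of S × S with the product apartness, is a quasi-detachable subset of S × S; consequently its apartness complement equals its logical complement: ∼τ = ¬τ. -/
/-- A co-quasiorder τ is a quasi-detachable subset of S × S (with the
product apartness), and consequently ∼τ = ¬τ. -/
theorem coquasiorder_qd_and_complements_coincide {S : Type*} (ap : S → S → Prop)
    (h_irrefl : ∀ x, ¬ ap x x)
    (h_symm : ∀ x y, ap x y → ap y x)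
    (h_cotrans : ∀ x z, ap x z → ∀ y, ap x y ∨ ap y z)
    (τ : S → S → Prop)
    (hsi : ∀ x y, τ x y → ap x y)
    (hct : ∀ x y, τ x y → ∀ z, τ x z ∨ τ z y) :
    (∀ x y : S, ∀ u v, τ u v → τ x y ∨ (ap x u ∨ ap y v)) ∧
    {p : S × S | ∀ u v, τ u v → ap p.1 u ∨ ap p.2 v} = {p : S × S | ¬ τ p.1 p.2} := by
  have qd : ∀ x y : S, ∀ u v, τ u v → τ x y ∨ (ap x u ∨ ap y v) := by
    intro x y u v huv
    rcases hct u v huv x with h | hxv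
    · exact Or.inr (Or.inl (h_symm _ _ (hsi _ _ h)))
    · rcases hct x v hxv y with h | h
      · exact Or.inl h
      · exact Or.inr (Or.inr (hsi _ _ h))
  refine ⟨qd, ?_⟩
  ext p
  simp only [Set.mem_setOf_eq]
  constructor
  · intro h hp
    rcases h p.1 p.2 hp with h' | h' <;> exact h_irrefl _ h'
  · intro h u v huv
    rcases qd p.1 p.2 u v huv with h' | h'
    · exact absurd h' h
    · exact h'
end

section
/- Let S be a set with an apartness relation # and let T be a strongly detachable subset of S. Then the relation τ defined by (a,b) ∈ τ iff (a ∈ ∼T and b ∈ T) is a co-quasiorder on S, i.e., it is strongly irreflexive and cotransitive. -/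
/-- From a strongly detachable subset T, the relation
(a,b) ∈ τ ↔ a ∈ ∼T ∧ b ∈ T is a co-quasiorder. -/
theorem sd_subset_gives_coquasiorder {S : Type*} (ap : S → S → Prop)
    (h_irrefl : ∀ x, ¬ ap x x)
    (h_symm : ∀ x y, ap x y → ap y x)
    (h_cotrans : ∀ x z, ap x z → ∀ y, ap x y ∨ ap y z)
    (T : Set S)
    (hsd : ∀ x : S, x ∈ T ∨ (∀ t ∈ T, ap x t)) :
    (∀ x y, ((∀ t ∈ T, ap x t) ∧ y ∈ T) → ap x y) ∧
    (∀ x y, ((∀ t ∈ T, ap x t) ∧ y ∈ T) →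
      ∀ z, ((∀ t ∈ T, ap x t) ∧ z ∈ T) ∨ ((∀ t ∈ T, ap z t) ∧ y ∈ T)) := by
  refine ⟨fun x y ⟨hx, hy⟩ => hx y hy, fun x y ⟨hx, hy⟩ z => ?_⟩
  rcases hsd z with hz | hz
  · exact Or.inl ⟨hx, hz⟩
  · exact Or.inr ⟨hz, hy⟩
end

section
/- Let S be a set with an apartness relation #, let ε be an equivalence relation on S, and let κ be a co-equivalence on S (a symmetric co-quasiorder). If κ and ε are compatible in the sense that κ defines an apartness on the quotient S/ε (i.e., the relation xε # yε ↔ (x,y) ∈ κ is well-defined and an apartness), then ε ∩ κ = ∅. Conversely, if ε ∩ κ = ∅, then the relation on S/ε given by xε # yε iff (x,y) ∈ κ is well-defined and is an apartness on S/ε. -/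
/-- A co-equivalence κ defines an apartness on the quotient S/ε
(well-definedness plus irreflexivity on classes; symmetry and cotransitivity
hold since κ is a co-equivalence) if and only if ε ∩ κ = ∅. -/
theorem coequivalence_defines_apartness_iff_disjoint {S : Type*} (ap : S → S → Prop)
    (h_irrefl : ∀ x, ¬ ap x x)
    (h_symm : ∀ x y, ap x y → ap y x)
    (h_cotrans : ∀ x z, ap x z → ∀ y, ap x y ∨ ap y z)
    (ε : S → S → Prop) (hε : Equivalence ε)
    (κ : S → S → Prop)
    (hκ_symm : ∀ x y, κ x y → κ y x)
    (hκ_si : ∀ x y, κ x y → ap x y)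
    (hκ_cotrans : ∀ x y, κ x y → ∀ z, κ x z ∨ κ z y) :
    ((∀ x a y b, ε x a → ε y b → (κ x y ↔ κ a b)) ∧ (∀ x y, ε x y → ¬ κ x y)) ↔
      (∀ x y, ¬ (ε x y ∧ κ x y)) := by
  constructor
  · rintro ⟨_, h2⟩ x y ⟨he, hk⟩
    exact h2 x y he hk
  · intro hd
    have wd : ∀ x a y b, ε x a → ε y b → κ x y → κ a b := by
      intro x a y b hxa hyb hxy
      rcases hκ_cotrans x y hxy a with h | h
      · exact absurd ⟨hxa, h⟩ (hd x a)
      rcases hκ_cotrans a y h b with h' | h'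
      · exact h'
      · exact absurd ⟨hyb, hκ_symm _ _ h'⟩ (hd y b)
    exact ⟨fun x a y b hxa hyb =>
      ⟨wd x a y b hxa hyb, wd a x b y (hε.symm hxa) (hε.symm hyb)⟩,
      fun x y he hk => hd x y ⟨he, hk⟩⟩
end

section
/- Let S be a set with an apartness relation # and let κ be a co-equivalence on S (symmetric, strongly irreflexive, cotransitive). Then the apartness complement ∼κ is an equivalence relation on S, and κ induces a well-defined apartness relation on the quotient set S/∼κ via [x] # [y] iff (x,y) ∈ κ. -/
/-- The relation on the quotient `Quot μ` induced by a relation `κ` on `S`. -/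
def quotAp {S : Type*} (μ κ : S → S → Prop) : Quot μ → Quot μ → Prop :=
  fun p q => ∃ x y, p = Quot.mk μ x ∧ q = Quot.mk μ y ∧ κ x y

/-- For a co-equivalence κ, the apartness complement ∼κ is an
equivalence relation, κ is well defined on ∼κ-classes, and κ induces an
apartness on the quotient S/∼κ. -/
theorem coequivalence_quotient {S : Type*} (ap : S → S → Prop)
    (h_irrefl : ∀ x, ¬ ap x x)
    (h_symm : ∀ x y, ap x y → ap y x)
    (h_cotrans : ∀ x z, ap x z → ∀ y, ap x y ∨ ap y z)
    (κ : S → S → Prop)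
    (hκ_symm : ∀ x y, κ x y → κ y x)
    (hκ_si : ∀ x y, κ x y → ap x y)
    (hκ_cotrans : ∀ x y, κ x y → ∀ z, κ x z ∨ κ z y) :
    Equivalence (fun x y => ∀ a b, κ a b → ap x a ∨ ap y b) ∧
    (∀ x a y b, (∀ u v, κ u v → ap x u ∨ ap a v) → (∀ u v, κ u v → ap y u ∨ ap b v) →
      (κ x y ↔ κ a b)) ∧
    (∀ p : Quot (fun x y => ∀ a b, κ a b → ap x a ∨ ap y b),
      ¬ quotAp _ κ p p) ∧
    (∀ p q : Quot (fun x y => ∀ a b, κ a b → ap x a ∨ ap y b),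
      quotAp _ κ p q → quotAp _ κ q p) ∧
    (∀ p r : Quot (fun x y => ∀ a b, κ a b → ap x a ∨ ap y b),
      quotAp _ κ p r → ∀ q, quotAp _ κ p q ∨ quotAp _ κ q r) := by
  set μ : S → S → Prop := fun x y => ∀ a b, κ a b → ap x a ∨ ap y b with hμ
  have hrefl : ∀ x, μ x x := by
    intro x a b hab
    rcases h_cotrans a b (hκ_si a b hab) x with h | h
    · exact Or.inl (h_symm a x h)
    · exact Or.inr h
  have hsymm : ∀ {x y}, μ x y → μ y x := by
    intro x y h a b hab
    rcases h b a (hκ_symm a b hab) with h' | h'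
    · exact Or.inr h'
    · exact Or.inl h'
  have htrans : ∀ {x y z}, μ x y → μ y z → μ x z := by
    intro x y z hxy hyz a b hab
    rcases hκ_cotrans a b hab y with h | h
    · rcases hxy a y h with h' | h'
      · exact Or.inl h'
      · exact absurd h' (h_irrefl y)
    · rcases hyz y b h with h' | h'
      · exact absurd h' (h_irrefl y)
      · exact Or.inr h'
  have hequiv : Equivalence μ := ⟨hrefl, fun h => hsymm h, fun h h' => htrans h h'⟩
  -- well-definedness
  have hwd : ∀ x a y b, μ x a → μ y b → (κ x y ↔ κ a b) := by
    have key : ∀ x a y b, μ x a → μ y b → κ x y → κ a b := by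
      intro x a y b hxa hyb hxy
      rcases hκ_cotrans x y hxy a with h | h
      · rcases hxa x a h with h' | h'
        · exact absurd h' (h_irrefl x)
        · exact absurd h' (h_irrefl a)
      · -- κ a y
        rcases hκ_cotrans a y h b with h' | h'
        · exact h'
        · -- κ b y, i.e. κ y b
          rcases hyb y b (hκ_symm b y h') with h'' | h''
          · exact absurd h'' (h_irrefl y)
          · exact absurd h'' (h_irrefl b)
    intro x a y b hxa hyb
    exact ⟨key x a y b hxa hyb, key a x b y (hsymm hxa) (hsymm hyb)⟩
  have hmkeq : ∀ {x y : S}, Quot.mk μ x = Quot.mk μ y → μ x y := by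
    intro x y h
    exact (Equivalence.eqvGen_iff hequiv).mp (Quot.eqvGen_exact h)
  refine ⟨hequiv, fun x a y b h1 h2 => hwd x a y b h1 h2, ?_, ?_, ?_⟩
  · rintro p ⟨x, y, hp, hq, hxy⟩
    have hxyμ : μ x y := hmkeq (hp ▸ hq ▸ rfl : Quot.mk μ x = Quot.mk μ y)
    rcases hxyμ x y hxy with h | h
    · exact h_irrefl x h
    · exact h_irrefl y h
  · rintro p q ⟨x, y, hp, hq, hxy⟩
    exact ⟨y, x, hq, hp, hκ_symm x y hxy⟩
  · rintro p r ⟨x, y, hp, hr, hxy⟩ q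
    obtain ⟨z, hz⟩ := Quot.exists_rep q
    rcases hκ_cotrans x y hxy z with h | h
    · exact Or.inl ⟨x, z, hp, hz.symm, h⟩
    · exact Or.inr ⟨z, y, hz.symm, hr, h⟩
end

section
/- Let f : S → T be a map between sets with apartness and let κ be a co-equivalence on S with κ ∩ ker f = ∅, where ker f = {(x,y) : f(x) = f(y)}. Equip S/ker f with the apartness induced by κ. Then the induced injection θ : S/ker f → T given by θ([x]) = f(x) is strongly extensional if and only if coker f ⊆ κ, where coker f = {(x,y) : f(x) # f(y)}. -/
/-- With S/ker f carrying the apartness induced by a co-equivalence κ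
disjoint from ker f, the induced map θ is strongly extensional iff coker f ⊆ κ. -/
theorem theta_se_iff_coker_subset {S T : Type*}
    (apS : S → S → Prop)
    (hS_irrefl : ∀ x, ¬ apS x x)
    (hS_symm : ∀ x y, apS x y → apS y x)
    (hS_cotrans : ∀ x z, apS x z → ∀ y, apS x y ∨ apS y z)
    (apT : T → T → Prop)
    (hT_irrefl : ∀ x, ¬ apT x x)
    (hT_symm : ∀ x y, apT x y → apT y x)
    (hT_cotrans : ∀ x z, apT x z → ∀ y, apT x y ∨ apT y z)
    (f : S → T)
    (κ : S → S → Prop)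
    (hκ_symm : ∀ x y, κ x y → κ y x)
    (hκ_si : ∀ x y, κ x y → apS x y)
    (hκ_cotrans : ∀ x y, κ x y → ∀ z, κ x z ∨ κ z y)
    (hdisj : ∀ x y, ¬ ((f x = f y) ∧ κ x y)) :
    (∀ p q : Quot (fun x y => f x = f y),
        apT (Quot.lift f (fun _ _ h => h) p) (Quot.lift f (fun _ _ h => h) q) →
        quotAp _ κ p q) ↔
      (∀ x y, apT (f x) (f y) → κ x y) := by
  constructor
  · intro hse x y hxy
    obtain ⟨a, b, ha, hb, hab⟩ := hse (Quot.mk _ x) (Quot.mk _ y) hxy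
    have hfa : f a = f x := congrArg (Quot.lift f (fun _ _ h => h)) ha.symm
    have hfb : f b = f y := congrArg (Quot.lift f (fun _ _ h => h)) hb.symm
    rcases hκ_cotrans a b hab x with h | h
    · exact absurd ⟨hfa, h⟩ (hdisj a x)
    · rcases hκ_cotrans x b h y with h2 | h2
      · exact h2
      · exact absurd ⟨hfb.symm, h2⟩ (hdisj y b)
  · intro hsub p q hpq
    induction p using Quot.ind with | _ x =>
    induction q using Quot.ind with | _ y =>
    exact ⟨x, y, rfl, rfl, hsub x y hpq⟩
end

section
/- Let S be a semigroup with apartness (associative multiplication that is strongly extensional: ax # by implies a # b or x # y). Let T ⊆ S be a strongly detachable convex subset (xy ∈ T implies x ∈ T and y ∈ T). If the apartness complement ∼T is inhabited, then ∼T is a two-sided ideal of S: for a ∈ ∼T and x ∈ S, both ax ∈ ∼T and xa ∈ ∼T. -/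
/-- If T is a strongly detachable convex subset of a semigroup with
apartness and ∼T is inhabited, then ∼T is a two-sided ideal. -/
theorem acomplement_of_sd_convex_is_ideal {S : Type*} (ap : S → S → Prop)
    (mul : S → S → S)
    (h_irrefl : ∀ x, ¬ ap x x)
    (h_symm : ∀ x y, ap x y → ap y x)
    (h_cotrans : ∀ x z, ap x z → ∀ y, ap x y ∨ ap y z)
    (h_assoc : ∀ a b c, mul (mul a b) c = mul a (mul b c))
    (h_se : ∀ a b x y, ap (mul a x) (mul b y) → ap a b ∨ ap x y)
    (T : Set S)
    (h_sd : ∀ x : S, x ∈ T ∨ (∀ t ∈ T, ap x t))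
    (h_convex : ∀ x y, mul x y ∈ T → x ∈ T ∧ y ∈ T)
    (h_inhab : ∃ z : S, ∀ t ∈ T, ap z t) :
    ∀ a, (∀ t ∈ T, ap a t) → ∀ x : S,
      (∀ t ∈ T, ap (mul a x) t) ∧ (∀ t ∈ T, ap (mul x a) t) := by
  intro a ha x
  constructor
  · intro t ht
    rcases h_sd (mul a x) with h | h
    · exact absurd (h_irrefl a) (fun hn => hn (ha a (h_convex a x h).1))
    · exact h t ht
  · intro t ht
    rcases h_sd (mul x a) with h | h
    · exact absurd (h_irrefl a) (fun hn => hn (ha a (h_convex x a h).2))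
    · exact h t ht
end

section
/- Let S be a semigroup with apartness and let I be a strongly detachable completely isolated ideal of S (ideal: a ∈ I, s ∈ S imply as, sa ∈ I; completely isolated: ab ∈ I implies a ∈ I or b ∈ I). Then the apartness complement ∼I is a convex subsemigroup of S: it is closed under multiplication, and xy ∈ ∼I implies x ∈ ∼I and y ∈ ∼I. -/
/-- If I is a strongly detachable completely isolated ideal of a
semigroup with apartness, then ∼I is a convex subsemigroup. -/
theorem acomplement_of_sd_ci_ideal_is_convex_subsemigroup {S : Type*}
    (ap : S → S → Prop) (mul : S → S → S)
    (h_irrefl : ∀ x, ¬ ap x x)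
    (h_symm : ∀ x y, ap x y → ap y x)
    (h_cotrans : ∀ x z, ap x z → ∀ y, ap x y ∨ ap y z)
    (h_assoc : ∀ a b c, mul (mul a b) c = mul a (mul b c))
    (h_se : ∀ a b x y, ap (mul a x) (mul b y) → ap a b ∨ ap x y)
    (I : Set S)
    (h_sd : ∀ x : S, x ∈ I ∨ (∀ i ∈ I, ap x i))
    (h_ideal : ∀ a ∈ I, ∀ s : S, mul a s ∈ I ∧ mul s a ∈ I)
    (h_ci : ∀ a b, mul a b ∈ I → a ∈ I ∨ b ∈ I) :
    (∀ x y, (∀ i ∈ I, ap x i) → (∀ i ∈ I, ap y i) → (∀ i ∈ I, ap (mul x y) i)) ∧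
    (∀ x y, (∀ i ∈ I, ap (mul x y) i) → (∀ i ∈ I, ap x i) ∧ (∀ i ∈ I, ap y i)) := by
  have notin : ∀ x : S, (∀ i ∈ I, ap x i) → x ∉ I := fun x hx hxI =>
    h_irrefl x (hx x hxI)
  constructor
  · intro x y hx hy
    rcases h_sd (mul x y) with h | h
    · rcases h_ci x y h with h' | h'
      · exact absurd h' (notin x hx)
      · exact absurd h' (notin y hy)
    · exact h
  · intro x y hxy
    have hxyI := notin _ hxy
    constructor
    · rcases h_sd x with h | h
      · exact absurd ((h_ideal x h y).1) hxyI
      · exact h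
    · rcases h_sd y with h | h
      · exact absurd ((h_ideal y h x).2) hxyI
      · exact h
end

section
/- Let S be a semigroup with apartness and let K be a strongly detachable convex subset of S. Then the relation τ defined by (a,b) ∈ τ iff (a ∈ ∼K and b ∈ K) is a complement-positive co-quasiorder on S: it is strongly irreflexive, cotransitive, and for all a, b ∈ S, the pairs (a, ab) and (a, ba) are apart from every element of τ (with the product apartness on S × S). -/
/-- From a strongly detachable convex subset K of a semigroup with
apartness, the relation (a,b) ∈ τ ↔ a ∈ ∼K ∧ b ∈ K is a complement-positive
co-quasiorder. -/
theorem sd_convex_gives_complement_positive_coquasiorder {S : Type*}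
    (ap : S → S → Prop) (mul : S → S → S)
    (h_irrefl : ∀ x, ¬ ap x x)
    (h_symm : ∀ x y, ap x y → ap y x)
    (h_cotrans : ∀ x z, ap x z → ∀ y, ap x y ∨ ap y z)
    (h_assoc : ∀ a b c, mul (mul a b) c = mul a (mul b c))
    (h_se : ∀ a b x y, ap (mul a x) (mul b y) → ap a b ∨ ap x y)
    (K : Set S)
    (h_sd : ∀ x : S, x ∈ K ∨ (∀ k ∈ K, ap x k))
    (h_convex : ∀ x y, mul x y ∈ K → x ∈ K ∧ y ∈ K) :
    (∀ a b, ((∀ k ∈ K, ap a k) ∧ b ∈ K) → ap a b) ∧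
    (∀ a b, ((∀ k ∈ K, ap a k) ∧ b ∈ K) →
      ∀ z, ((∀ k ∈ K, ap a k) ∧ z ∈ K) ∨ ((∀ k ∈ K, ap z k) ∧ b ∈ K)) ∧
    (∀ a b : S, ∀ u v, ((∀ k ∈ K, ap u k) ∧ v ∈ K) → ap a u ∨ ap (mul a b) v) ∧
    (∀ a b : S, ∀ u v, ((∀ k ∈ K, ap u k) ∧ v ∈ K) → ap a u ∨ ap (mul b a) v) := by
  refine ⟨fun a b h => h.1 b h.2, fun a b h z => ?_, fun a b u v h => ?_, fun a b u v h => ?_⟩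
  · rcases h_sd z with hz | hz
    · exact Or.inl ⟨h.1, hz⟩
    · exact Or.inr ⟨hz, h.2⟩
  · rcases h_sd (mul a b) with hk | hk
    · exact Or.inl (h_symm _ _ (h.1 a (h_convex a b hk).1))
    · exact Or.inr (hk v h.2)
  · rcases h_sd (mul b a) with hk | hk
    · exact Or.inl (h_symm _ _ (h.1 a (h_convex b a hk).2))
    · exact Or.inr (hk v h.2)
end

section
/- Let τ be a complement-positive co-quasiorder on a semigroup with apartness S. Then for all a, b ∈ S, the right class τ(ab) = {x : (x, ab) ∈ τ} is contained in τa ∩ τb, where τa = {x : (x,a) ∈ τ}. -/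
/-- For a complement-positive co-quasiorder τ on a semigroup with
apartness, τ(ab) ⊆ τa ∩ τb. -/
theorem complement_positive_right_classes {S : Type*}
    (ap : S → S → Prop) (mul : S → S → S)
    (h_irrefl : ∀ x, ¬ ap x x)
    (h_symm : ∀ x y, ap x y → ap y x)
    (h_cotrans : ∀ x z, ap x z → ∀ y, ap x y ∨ ap y z)
    (h_assoc : ∀ a b c, mul (mul a b) c = mul a (mul b c))
    (h_se : ∀ a b x y, ap (mul a x) (mul b y) → ap a b ∨ ap x y)
    (τ : S → S → Prop)
    (hsi : ∀ x y, τ x y → ap x y)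
    (hct : ∀ x y, τ x y → ∀ z, τ x z ∨ τ z y)
    (hcp₁ : ∀ a b : S, ∀ u v, τ u v → ap a u ∨ ap (mul a b) v)
    (hcp₂ : ∀ a b : S, ∀ u v, τ u v → ap a u ∨ ap (mul b a) v) :
    ∀ a b x : S, τ x (mul a b) → τ x a ∧ τ x b := by
  intro a b x hx
  constructor
  · rcases hct x (mul a b) hx a with h | h
    · exact h
    · rcases hcp₁ a b a (mul a b) h with h' | h'
      · exact absurd h' (h_irrefl a)
      · exact absurd h' (h_irrefl _)
  · rcases hct x (mul a b) hx b with h | h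
    · exact h
    · rcases hcp₂ b a b (mul a b) h with h' | h'
      · exact absurd h' (h_irrefl b)
      · exact absurd h' (h_irrefl _)
end

section
/- Let S be a semigroup with apartness and τ a co-quasiorder on S. If for every a ∈ S the left class aτ = {x : (a,x) ∈ τ} is a strongly detachable convex subset of S and a is apart from every element of aτ, then τ is complement positive: for all a, b ∈ S, (a, ab) ∈ ∼τ and (a, ba) ∈ ∼τ. -/
/-- If every left class aτ is a strongly detachable convex subset
and a is apart from every element of aτ, then τ is complement positive. -/
theorem left_classes_sd_convex_implies_complement_positive {S : Type*}
    (ap : S → S → Prop) (mul : S → S → S)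
    (h_irrefl : ∀ x, ¬ ap x x)
    (h_symm : ∀ x y, ap x y → ap y x)
    (h_cotrans : ∀ x z, ap x z → ∀ y, ap x y ∨ ap y z)
    (h_assoc : ∀ a b c, mul (mul a b) c = mul a (mul b c))
    (h_se : ∀ a b x y, ap (mul a x) (mul b y) → ap a b ∨ ap x y)
    (τ : S → S → Prop)
    (hsi : ∀ x y, τ x y → ap x y)
    (hct : ∀ x y, τ x y → ∀ z, τ x z ∨ τ z y)
    (h_sd : ∀ a x : S, τ a x ∨ (∀ k, τ a k → ap x k))
    (h_convex : ∀ a x y, τ a (mul x y) → τ a x ∧ τ a y)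
    (h_apart : ∀ a x, τ a x → ap a x) :
    (∀ a b : S, ∀ u v, τ u v → ap a u ∨ ap (mul a b) v) ∧
    (∀ a b : S, ∀ u v, τ u v → ap a u ∨ ap (mul b a) v) := by
  constructor
  · intro a b u v huv
    rcases hct u v huv a with h | h
    · exact Or.inl (h_symm u a (hsi u a h))
    · rcases hct a v h (mul a b) with h2 | h2
      · exact absurd (hsi a a (h_convex a a b h2).1) (h_irrefl a)
      · exact Or.inr (hsi (mul a b) v h2)
  · intro a b u v huv
    rcases hct u v huv a with h | h
    · exact Or.inl (h_symm u a (hsi u a h))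
    · rcases hct a v h (mul b a) with h2 | h2
      · exact absurd (hsi a a (h_convex a b a h2).2) (h_irrefl a)
      · exact Or.inr (hsi (mul b a) v h2)
end

section
/- Let S be a semigroup with apartness, μ a congruence on S (equivalence compatible with multiplication), and κ a co-congruence on S (co-equivalence that is co-compatible: (ax,by) ∈ κ implies (a,b) ∈ κ or (x,y) ∈ κ), with μ ∩ κ = ∅. Then the quotient S/μ, with multiplication [x][y] = [xy] and apartness [x] # [y] iff (x,y) ∈ κ, is a semigroup with apartness (the apartness is well-defined, irreflexive, symmetric, cotransitive, and multiplication is strongly extensional), and the quotient map π : S → S/μ is a surjective, strongly extensional homomorphism. -/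
/-- If μ is a congruence and κ a co-congruence on a semigroup with
apartness with μ ∩ κ = ∅, then S/μ with multiplication [x][y] = [xy] and the
apartness induced by κ is a semigroup with apartness, and the quotient map is a
surjective strongly extensional homomorphism. -/
theorem quotient_semigroup_with_apartness {S : Type*}
    (ap : S → S → Prop) (mul : S → S → S)
    (h_irrefl : ∀ x, ¬ ap x x)
    (h_symm : ∀ x y, ap x y → ap y x)
    (h_cotrans : ∀ x z, ap x z → ∀ y, ap x y ∨ ap y z)
    (h_assoc : ∀ a b c, mul (mul a b) c = mul a (mul b c))
    (h_se : ∀ a b x y, ap (mul a x) (mul b y) → ap a b ∨ ap x y)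
    (μ : S → S → Prop) (hμ : Equivalence μ)
    (hμ_compat : ∀ a b x y, μ a b → μ x y → μ (mul a x) (mul b y))
    (κ : S → S → Prop)
    (hκ_symm : ∀ x y, κ x y → κ y x)
    (hκ_si : ∀ x y, κ x y → ap x y)
    (hκ_cotrans : ∀ x y, κ x y → ∀ z, κ x z ∨ κ z y)
    (hκ_cc : ∀ a b x y, κ (mul a x) (mul b y) → κ a b ∨ κ x y)
    (hdisj : ∀ x y, ¬ (μ x y ∧ κ x y)) :
    ∃ mulQ : Quot μ → Quot μ → Quot μ,
      (∀ x y : S, mulQ (Quot.mk μ x) (Quot.mk μ y) = Quot.mk μ (mul x y)) ∧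
      (∀ p q r : Quot μ, mulQ (mulQ p q) r = mulQ p (mulQ q r)) ∧
      (∀ x a y b, μ x a → μ y b → (κ x y ↔ κ a b)) ∧
      (∀ p : Quot μ, ¬ quotAp μ κ p p) ∧
      (∀ p q : Quot μ, quotAp μ κ p q → quotAp μ κ q p) ∧
      (∀ p r : Quot μ, quotAp μ κ p r → ∀ q, quotAp μ κ p q ∨ quotAp μ κ q r) ∧
      (∀ p q u v : Quot μ, quotAp μ κ (mulQ p u) (mulQ q v) →
        quotAp μ κ p q ∨ quotAp μ κ u v) ∧
      Function.Surjective (Quot.mk μ) ∧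
      (∀ x y : S, Quot.mk μ (mul x y) = mulQ (Quot.mk μ x) (Quot.mk μ y)) ∧
      (∀ x y : S, quotAp μ κ (Quot.mk μ x) (Quot.mk μ y) → ap x y) := by
  -- κ transfers along μ
  have kwd : ∀ x a y b, μ x a → μ y b → κ x y → κ a b := by
    intro x a y b hxa hyb hxy
    have h1 : κ a y := by
      rcases hκ_cotrans x y hxy a with h | h
      · exact absurd ⟨hxa, h⟩ (hdisj x a)
      · exact h
    rcases hκ_cotrans a y h1 b with h | h
    · exact h
    · exact absurd ⟨hyb, hκ_symm _ _ h⟩ (hdisj y b)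
  have kiff : ∀ x a y b, μ x a → μ y b → (κ x y ↔ κ a b) :=
    fun x a y b hxa hyb =>
      ⟨kwd x a y b hxa hyb, kwd a x b y (hμ.symm hxa) (hμ.symm hyb)⟩
  -- Quot.mk equality gives μ
  have mkeq : ∀ a b : S, Quot.mk μ a = Quot.mk μ b → μ a b := by
    intro a b h
    have := Quot.eq.mp h
    exact (Equivalence.eqvGen_iff hμ).mp this
  -- define mulQ
  let mulQ : Quot μ → Quot μ → Quot μ :=
    Quot.lift (fun x => Quot.lift (fun y => Quot.mk μ (mul x y))
        (fun y b hyb => Quot.sound (hμ_compat x x y b (hμ.refl x) hyb)))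
      (fun x a hxa => by
        funext q
        induction q using Quot.ind with
        | _ y => exact Quot.sound (hμ_compat x a y y hxa (hμ.refl y)))
  have hmul : ∀ x y : S, mulQ (Quot.mk μ x) (Quot.mk μ y) = Quot.mk μ (mul x y) :=
    fun x y => rfl
  refine ⟨mulQ, hmul, ?_, kiff, ?_, ?_, ?_, ?_, ?_,
    fun x y => rfl, ?_⟩
  · intro p q r
    induction p using Quot.ind with | _ x =>
    induction q using Quot.ind with | _ y =>
    induction r using Quot.ind with | _ z =>
    simp only [hmul]
    rw [h_assoc]
  · rintro p ⟨x, y, hx, hy, hk⟩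
    exact hdisj x y ⟨mkeq x y (hx ▸ hy), hk⟩
  · rintro p q ⟨x, y, hx, hy, hk⟩
    exact ⟨y, x, hy, hx, hκ_symm _ _ hk⟩
  · rintro p r ⟨x, z, hx, hz, hk⟩ q
    induction q using Quot.ind with | _ y =>
    rcases hκ_cotrans x z hk y with h | h
    · exact Or.inl ⟨x, y, hx, rfl, h⟩
    · exact Or.inr ⟨y, z, rfl, hz, h⟩
  · intro p q u v h
    induction p using Quot.ind with | _ x =>
    induction q using Quot.ind with | _ y =>
    induction u using Quot.ind with | _ u₀ =>
    induction v using Quot.ind with | _ v₀ =>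
    rcases h with ⟨a, b, ha, hb, hk⟩
    have h1 : μ (mul x u₀) a := mkeq _ _ ha
    have h2 : μ (mul y v₀) b := mkeq _ _ hb
    have hk' : κ (mul x u₀) (mul y v₀) :=
      kwd a (mul x u₀) b (mul y v₀) (hμ.symm h1) (hμ.symm h2) hk
    rcases hκ_cc x y u₀ v₀ hk' with h | h
    · exact Or.inl ⟨x, y, rfl, rfl, h⟩
    · exact Or.inr ⟨u₀, v₀, rfl, rfl, h⟩
  · intro p
    induction p using Quot.ind with | _ x =>
    exact ⟨x, rfl⟩
  · rintro x y ⟨a, b, ha, hb, hk⟩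
    have := kwd a x b y (hμ.symm (mkeq _ _ ha)) (hμ.symm (mkeq _ _ hb)) hk
    exact hκ_si _ _ this
end
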